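/- Let K be a separable Banach space with Borel σ-algebra, let κ be a Markov kernel from K to K, and let μ be a probability measure on K invariant under κ, i.e., the measure μ.bind κ equals μ. Assume there exist a ≥ 0 and b ∈ [0, 1) such that ∫_K ‖z‖ κ(v, dz) ≤ a + b ‖v‖ for every v ∈ K, and that ∫_K ‖z‖ μ(dz) < ∞. Then ∫_K ‖z‖ μ(dz) ≤ a/(1 − b). -/

import Mathlib

open MeasureTheory ProbabilityTheory
open scoped ENNReal NNReal

/-!
Integrating the one-step drift bound against the invariant measure `μ` gives
`M ≤ a + b M` for the first moment `M = ∫ ‖z‖ dμ`; since `M` is finite and `b < 1`,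
this rearranges to `M ≤ a / (1 - b)`.
-/

theorem ENNReal.le_div_one_sub_of_le_add_mul {a b x : ℝ≥0∞} (hx : x ≠ ∞) (hb : b < 1)
    (h : x ≤ a + b * x) : x ≤ a / (1 - b) := by
  have hsub : (1 - b) * x ≤ a := by
    rw [ENNReal.sub_mul fun _ _ => hx, one_mul]
    exact tsub_le_iff_right.2 h
  rw [ENNReal.le_div_iff_mul_le (Or.inl (tsub_pos_of_lt hb).ne')
    (Or.inl (ENNReal.sub_ne_top ENNReal.one_ne_top)), mul_comm]
  exact hsub

theorem MeasureTheory.Measure.lintegral_le_div_one_sub_of_bind_eq_self {α : Type*}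
    [MeasurableSpace α] {μ : Measure α} [IsProbabilityMeasure μ] {κ : α → Measure α}
    (hinv : μ.bind κ = μ) {V : α → ℝ≥0∞} {A B : ℝ≥0∞} (hB : B < 1)
    (hdrift : ∀ x, ∫⁻ y, V y ∂κ x ≤ A + B * V x) (hfin : ∫⁻ x, V x ∂μ ≠ ∞) :
    ∫⁻ x, V x ∂μ ≤ A / (1 - B) := by
  refine ENNReal.le_div_one_sub_of_le_add_mul hfin hB ?_
  calc ∫⁻ x, V x ∂μ = ∫⁻ x, V x ∂μ.bind κ := by rw [hinv]
    _ ≤ ∫⁻ x, ∫⁻ y, V y ∂κ x ∂μ := lintegral_bind_le V μ κ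
    _ ≤ ∫⁻ x, (A + B * V x) ∂μ := lintegral_mono hdrift
    _ = A + B * ∫⁻ x, V x ∂μ := by
      rw [lintegral_add_left measurable_const, lintegral_const, measure_univ, mul_one,
        lintegral_const_mul' B V (hB.trans ENNReal.one_lt_top).ne]

theorem invariant_measure_first_moment_bound_general
    {K : Type*} [NormedAddCommGroup K]
    [MeasurableSpace K]
    (κ : Kernel K K)
    (μ : Measure K) [IsProbabilityMeasure μ]
    (hinv : μ.bind (fun v => κ v) = μ)
    (a b : ℝ) (hb : b ∈ Set.Ico (0:ℝ) 1)
    (hmom : ∀ v : K, ∫⁻ z, (‖z‖₊ : ℝ≥0∞) ∂(κ v) ≤ ENNReal.ofReal (a + b * ‖v‖))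
    (hfin : ∫⁻ z, (‖z‖₊ : ℝ≥0∞) ∂μ < ⊤) :
    ∫⁻ z, (‖z‖₊ : ℝ≥0∞) ∂μ ≤ ENNReal.ofReal (a / (1 - b)) := by
  obtain ⟨hb0, hb1⟩ := hb
  have hdrift (v : K) : ∫⁻ z, (‖z‖₊ : ℝ≥0∞) ∂(κ v) ≤
      ENNReal.ofReal a + ENNReal.ofReal b * (‖v‖₊ : ℝ≥0∞) :=
    calc _ ≤ ENNReal.ofReal (a + b * ‖v‖) := hmom v
      _ ≤ ENNReal.ofReal a + ENNReal.ofReal (b * ‖v‖) := ENNReal.ofReal_add_le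
      _ = ENNReal.ofReal a + ENNReal.ofReal b * (‖v‖₊ : ℝ≥0∞) := by
        rw [ENNReal.ofReal_mul hb0, ofReal_norm, enorm_eq_nnnorm]
  have hB : ENNReal.ofReal b < 1 := ENNReal.ofReal_lt_one.2 hb1
  have h1b : 1 - ENNReal.ofReal b = ENNReal.ofReal (1 - b) := by
    rw [← ENNReal.ofReal_one, ENNReal.ofReal_sub _ hb0]
  calc ∫⁻ z, (‖z‖₊ : ℝ≥0∞) ∂μ ≤ ENNReal.ofReal a / (1 - ENNReal.ofReal b) :=
        Measure.lintegral_le_div_one_sub_of_bind_eq_self hinv hB hdrift hfin.ne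
    _ = ENNReal.ofReal (a / (1 - b)) := by
      rw [h1b, ENNReal.ofReal_div_of_pos (sub_pos.2 hb1)]

theorem invariant_measure_first_moment_bound
    {K : Type*} [NormedAddCommGroup K] [NormedSpace ℝ K] [CompleteSpace K]
    [TopologicalSpace.SeparableSpace K] [MeasurableSpace K] [BorelSpace K]
    (κ : Kernel K K) [IsMarkovKernel κ]
    (μ : Measure K) [IsProbabilityMeasure μ]
    (hinv : μ.bind (fun v => κ v) = μ)
    (a b : ℝ) (ha : 0 ≤ a) (hb : b ∈ Set.Ico (0:ℝ) 1)
    (hmom : ∀ v : K, ∫⁻ z, (‖z‖₊ : ℝ≥0∞) ∂(κ v) ≤ ENNReal.ofReal (a + b * ‖v‖))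
    (hfin : ∫⁻ z, (‖z‖₊ : ℝ≥0∞) ∂μ < ⊤) :
    ∫⁻ z, (‖z‖₊ : ℝ≥0∞) ∂μ ≤ ENNReal.ofReal (a / (1 - b)) :=
  invariant_measure_first_moment_bound_general κ μ hinv a b hb hmom hfin
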